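/- Let h, m : S¹_ℓ → ℝ be smooth, φ > 0, and suppose the normalizations φ‖m‖² = φ‖h‖² = 1 and ⟨m,h⟩ = 0 hold, where ⟨u,v⟩ = ∫ uv dθ. Then the Christoffel-symbol expression Γ(h,m) = (1/2)κhm + (φ'/(2φ))[⟨κ,h⟩m + ⟨κ,m⟩h − ⟨h,m⟩κ] satisfies φ⟨Γ(h,m),Γ(h,m)⟩ − φ⟨Γ(m,m),Γ(h,h)⟩ = (1/4)(φ'/φ)²(3⟨m,κ⟩² + 3⟨h,κ⟩² − ‖κ‖²/φ) + (1/4)(φ'/φ)(‖mκ‖² + ‖hκ‖²). -/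

import Mathlib

open intervalIntegral MeasureTheory in
lemma int_add6 (l a b c d e f : ℝ) (F G H U V W : ℝ → ℝ)
    (hF : Continuous F) (hG : Continuous G) (hH : Continuous H)
    (hU : Continuous U) (hV : Continuous V) (hW : Continuous W) :
    (∫ x in (0:ℝ)..l, (a * F x + b * G x + c * H x + d * U x + e * V x + f * W x))
      = a * (∫ x in (0:ℝ)..l, F x) + b * (∫ x in (0:ℝ)..l, G x)
        + c * (∫ x in (0:ℝ)..l, H x) + d * (∫ x in (0:ℝ)..l, U x)
        + e * (∫ x in (0:ℝ)..l, V x) + f * (∫ x in (0:ℝ)..l, W x) := by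
  have i1 : IntervalIntegrable (fun x => a * F x) volume 0 l := (continuous_const.mul hF).intervalIntegrable 0 l
  have i2 : IntervalIntegrable (fun x => b * G x) volume 0 l := (continuous_const.mul hG).intervalIntegrable 0 l
  have i3 : IntervalIntegrable (fun x => c * H x) volume 0 l := (continuous_const.mul hH).intervalIntegrable 0 l
  have i4 : IntervalIntegrable (fun x => d * U x) volume 0 l := (continuous_const.mul hU).intervalIntegrable 0 l
  have i5 : IntervalIntegrable (fun x => e * V x) volume 0 l := (continuous_const.mul hV).intervalIntegrable 0 l
  have i6 : IntervalIntegrable (fun x => f * W x) volume 0 l := (continuous_const.mul hW).intervalIntegrable 0 l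
  rw [integral_add ((((i1.add i2).add i3).add i4).add i5) i6,
      integral_add (((i1.add i2).add i3).add i4) i5,
      integral_add ((i1.add i2).add i3) i4,
      integral_add (i1.add i2) i3, integral_add i1 i2]
  simp [intervalIntegral.integral_const_mul]

open intervalIntegral MeasureTheory in
lemma int_add9 (l a b c d e f g p q : ℝ) (F G H U V W X Y Z : ℝ → ℝ)
    (hF : Continuous F) (hG : Continuous G) (hH : Continuous H)
    (hU : Continuous U) (hV : Continuous V) (hW : Continuous W)
    (hX : Continuous X) (hY : Continuous Y) (hZ : Continuous Z) :
    (∫ x in (0:ℝ)..l, (a * F x + b * G x + c * H x + d * U x + e * V x + f * W x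
        + g * X x + p * Y x + q * Z x))
      = a * (∫ x in (0:ℝ)..l, F x) + b * (∫ x in (0:ℝ)..l, G x)
        + c * (∫ x in (0:ℝ)..l, H x) + d * (∫ x in (0:ℝ)..l, U x)
        + e * (∫ x in (0:ℝ)..l, V x) + f * (∫ x in (0:ℝ)..l, W x)
        + g * (∫ x in (0:ℝ)..l, X x) + p * (∫ x in (0:ℝ)..l, Y x)
        + q * (∫ x in (0:ℝ)..l, Z x) := by
  have i6 : IntervalIntegrable (fun x => a * F x + b * G x + c * H x + d * U x + e * V x + f * W x) volume 0 l := by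
    apply Continuous.intervalIntegrable; continuity
  have i7 : IntervalIntegrable (fun x => g * X x) volume 0 l := (continuous_const.mul hX).intervalIntegrable 0 l
  have i8 : IntervalIntegrable (fun x => p * Y x) volume 0 l := (continuous_const.mul hY).intervalIntegrable 0 l
  have i9 : IntervalIntegrable (fun x => q * Z x) volume 0 l := (continuous_const.mul hZ).intervalIntegrable 0 l
  rw [integral_add ((i6.add i7).add i8) i9, integral_add (i6.add i7) i8, integral_add i6 i7,
      int_add6 l a b c d e f F G H U V W hF hG hH hU hV hW,
      intervalIntegral.integral_const_mul, intervalIntegral.integral_const_mul, intervalIntegral.integral_const_mul]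

/-- Christoffel-symbol expression Γ(u,v) = ½κuv + (φ'/2φ)[⟨κ,u⟩v + ⟨κ,v⟩u − ⟨u,v⟩κ]. -/
noncomputable def Gam (l φ φ' : ℝ) (κ u v : ℝ → ℝ) : ℝ → ℝ := fun θ =>
  (1 / 2) * κ θ * u θ * v θ +
    φ' / (2 * φ) * ((∫ x in (0:ℝ)..l, κ x * u x) * v θ +
      (∫ x in (0:ℝ)..l, κ x * v x) * u θ - (∫ x in (0:ℝ)..l, u x * v x) * κ θ)

/-- The Christoffel term of the sectional curvature. -/
theorem stmt19 (l φ φ' : ℝ) (hl : 0 < l) (hφ : 0 < φ) (hφ' : 0 < φ')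
    (m h κ : ℝ → ℝ) (hm : ContDiff ℝ (⊤ : ℕ∞) m) (hh : ContDiff ℝ (⊤ : ℕ∞) h) (hκ : ContDiff ℝ (⊤ : ℕ∞) κ)
    (hnm : φ * ∫ θ in (0:ℝ)..l, (m θ) ^ 2 = 1)
    (hnh : φ * ∫ θ in (0:ℝ)..l, (h θ) ^ 2 = 1)
    (horth : ∫ θ in (0:ℝ)..l, m θ * h θ = 0) :
    φ * (∫ θ in (0:ℝ)..l, (Gam l φ φ' κ h m θ) ^ 2)
        - φ * (∫ θ in (0:ℝ)..l, Gam l φ φ' κ m m θ * Gam l φ φ' κ h h θ)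
      = (1 / 4) * (φ' / φ) ^ 2 *
          (3 * (∫ θ in (0:ℝ)..l, m θ * κ θ) ^ 2 + 3 * (∫ θ in (0:ℝ)..l, h θ * κ θ) ^ 2
            - (∫ θ in (0:ℝ)..l, (κ θ) ^ 2) / φ)
        + (1 / 4) * (φ' / φ) *
          ((∫ θ in (0:ℝ)..l, (m θ) ^ 2 * (κ θ) ^ 2) +
            ∫ θ in (0:ℝ)..l, (h θ) ^ 2 * (κ θ) ^ 2) := by
  have cm : Continuous m := hm.continuous
  have ch : Continuous h := hh.continuous
  have ck : Continuous κ := hκ.continuous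
  set c : ℝ := φ' / (2 * φ) with hc
  set A : ℝ := ∫ x in (0:ℝ)..l, κ x * h x with hA
  set B : ℝ := ∫ x in (0:ℝ)..l, κ x * m x with hB
  -- commuted-integral facts
  have hC : (∫ x in (0:ℝ)..l, h x * m x) = 0 := by
    rw [show (∫ x in (0:ℝ)..l, h x * m x) = ∫ x in (0:ℝ)..l, m x * h x from
      intervalIntegral.integral_congr fun x _ => mul_comm _ _]
    exact horth
  have hMK : (∫ θ in (0:ℝ)..l, m θ * κ θ) = B := by
    rw [hB]; exact intervalIntegral.integral_congr fun x _ => mul_comm _ _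
  have hHK : (∫ θ in (0:ℝ)..l, h θ * κ θ) = A := by
    rw [hA]; exact intervalIntegral.integral_congr fun x _ => mul_comm _ _
  have hMM : (∫ x in (0:ℝ)..l, m x * m x) = 1 / φ := by
    rw [show (∫ x in (0:ℝ)..l, m x * m x) = ∫ θ in (0:ℝ)..l, (m θ) ^ 2 from
      intervalIntegral.integral_congr fun x _ => (sq (m x)).symm]
    field_simp
    linarith
  have hHH : (∫ x in (0:ℝ)..l, h x * h x) = 1 / φ := by
    rw [show (∫ x in (0:ℝ)..l, h x * h x) = ∫ θ in (0:ℝ)..l, (h θ) ^ 2 from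
      intervalIntegral.integral_congr fun x _ => (sq (h x)).symm]
    field_simp
    linarith
  -- expand the first integrand
  have e1 : (fun θ => (Gam l φ φ' κ h m θ) ^ 2)
      = fun θ => (1/4) * ((m θ)^2 * (h θ)^2 * (κ θ)^2)
          + (c * A) * (κ θ * h θ * (m θ)^2)
          + (c * B) * (κ θ * (h θ)^2 * m θ)
          + (c^2 * A^2) * ((m θ)^2)
          + (c^2 * B^2) * ((h θ)^2)
          + (2 * c^2 * A * B) * (m θ * h θ) := by
    funext θ
    simp only [Gam, ← hA, ← hB, hC, ← hc]
    ring
  -- expand the second integrand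
  have e2 : (fun θ => Gam l φ φ' κ m m θ * Gam l φ φ' κ h h θ)
      = fun θ => (1/4) * ((m θ)^2 * (h θ)^2 * (κ θ)^2)
          + (c * A) * (κ θ * h θ * (m θ)^2)
          + (c * B) * (κ θ * (h θ)^2 * m θ)
          + (-(c / (2 * φ))) * ((m θ)^2 * (κ θ)^2)
          + (-(c / (2 * φ))) * ((h θ)^2 * (κ θ)^2)
          + (4 * c^2 * A * B) * (m θ * h θ)
          + (-(2 * c^2 * B / φ)) * (κ θ * m θ)
          + (-(2 * c^2 * A / φ)) * (κ θ * h θ)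
          + (c^2 / φ^2) * ((κ θ)^2) := by
    funext θ
    simp only [Gam, ← hA, ← hB, hMM, hHH, ← hc]
    ring
  rw [e1, e2,
      int_add6 l _ _ _ _ _ _ _ _ _ _ _ _
        (by fun_prop) (by fun_prop) (by fun_prop) (by fun_prop) (by fun_prop) (by fun_prop),
      int_add9 l _ _ _ _ _ _ _ _ _ _ _ _ _ _ _ _ _ _
        (by fun_prop) (by fun_prop) (by fun_prop) (by fun_prop) (by fun_prop)
        (by fun_prop) (by fun_prop) (by fun_prop) (by fun_prop)]
  rw [show (∫ x in (0:ℝ)..l, (m x)^2) = 1 / φ by field_simp; linarith,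
      show (∫ x in (0:ℝ)..l, (h x)^2) = 1 / φ by field_simp; linarith,
      horth, ← hA, ← hB, hMK, hHK]
  simp only [hc]
  field_simp
  ring
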